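/- Let S be a finite set, g : S × S → {0,1}, and p : S → ℝ with 0 ≤ p_s ≤ |S| − 1 for all s ∈ S, such that the Miller–Tucker–Zemlin inequalities −|S|·(1 − g(s̄,s)) ≤ p_s − p_{s̄} − 1 hold for all s, s̄ ∈ S. Then the directed graph on vertex set S with an edge from s̄ to s whenever g(s̄,s) = 1 contains no directed cycle. -/

import Mathlib

/-! An edge `s̄ → s` with `g s̄ s = 1` switches off the big-`M` slack in the MTZ inequality and
forces `p s̄ < p s`. The priorities therefore strictly increase along every walk, and a
directed cycle would give `p s < p s` for any of its vertices. -/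

theorem Relation.TransGen.lt_of_rel_imp_lt {α β : Type*} [Preorder β] {r : α → α → Prop}
    {f : α → β} (hf : ∀ a b, r a b → f a < f b) {a b : α} (h : Relation.TransGen r a b) :
    f a < f b := by
  have hlift : Relation.TransGen (· < ·) (f a) (f b) := Relation.TransGen.lift f hf a b h
  rwa [Relation.transGen_eq_self] at hlift

theorem List.IsChain.transGen_head_head {α : Type*} {r : α → α → Prop} {c : List α}
    (hc : c.IsChain r) (hne : c ≠ []) (hclose : r (c.getLast hne) (c.head hne)) :
    Relation.TransGen r (c.head hne) (c.head hne) :=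
  .tail' (List.relationReflTransGen_of_exists_isChain c hc hne) hclose

theorem not_exists_cycle_of_rel_imp_lt {α β : Type*} [Preorder β] {r : α → α → Prop}
    (f : α → β) (hf : ∀ a b, r a b → f a < f b) :
    ¬ ∃ (c : List α) (h : c ≠ []), c.IsChain r ∧ r (c.getLast h) (c.head h) := by
  rintro ⟨c, hne, hchain, hclose⟩
  exact lt_irrefl _ ((hchain.transGen_head_head hne hclose).lt_of_rel_imp_lt hf)

theorem mtz_acyclic_general {S : Type} [Fintype S]
    (g : S → S → ℕ)
    (p : S → ℝ)
    (hMTZ : ∀ s sb : S, -(Fintype.card S : ℝ) * (1 - (g sb s : ℝ)) ≤ p s - p sb - 1) :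
    ¬ ∃ (c : List S) (h : c ≠ []),
        c.Chain' (fun a b => g a b = 1) ∧ g (c.getLast h) (c.head h) = 1 := by
  refine not_exists_cycle_of_rel_imp_lt p fun a b hab => ?_
  have hslack := hMTZ b a
  rw [hab, Nat.cast_one, sub_self, mul_zero] at hslack
  linarith

theorem mtz_acyclic {S : Type} [Fintype S] [DecidableEq S]
    (g : S → S → ℕ) (hg : ∀ s t : S, g s t ≤ 1)
    (p : S → ℝ) (hp : ∀ s : S, 0 ≤ p s ∧ p s ≤ (Fintype.card S : ℝ) - 1)
    (hMTZ : ∀ s sb : S, -(Fintype.card S : ℝ) * (1 - (g sb s : ℝ)) ≤ p s - p sb - 1) :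
    ¬ ∃ (c : List S) (h : c ≠ []),
        c.Chain' (fun a b => g a b = 1) ∧ g (c.getLast h) (c.head h) = 1 :=
  mtz_acyclic_general g p hMTZ
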